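/- arXiv:2303.12497 — 6 statements merged into one kernel-verified Lean document; each statement's English description precedes it below -/
import Mathlib

section
/- Let 𝒲 and 𝒳 be nonempty finite types, let p : 𝒲 → [0,1] be a probability mass function (prior), let q(·|w) be a probability mass function on 𝒳 for each w ∈ 𝒲 (the channel), let 𝒲̂ be any type, let ℓ : 𝒲 × 𝒲̂ → [0, ∞) be a loss, and let φ : 𝒳 → 𝒲̂ be any estimator. Then for every ρ > 0, Σ_{w ∈ 𝒲} Σ_{x ∈ 𝒳} p(w) q(x|w) ℓ(w, φ(x)) ≥ ρ · ( 1 − L_W(ρ) · Σ_{x ∈ 𝒳} max_{w ∈ 𝒲} q(x|w) ), where L_W(ρ) = sup_{ŵ ∈ 𝒲̂} Σ_{w : ℓ(w,ŵ) < ρ} p(w). -/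
/-- Discrete maximal-leakage lower bound on the Bayesian risk: for finite alphabets,
the expected loss of any estimator is at least
`ρ (1 − L_W(ρ) · Σ_x max_w q(x|w))`. -/
theorem discrete_bayes_risk_ge_maximal_leakage
    {W X Wh : Type*} [Fintype W] [Fintype X] [Nonempty W] [Nonempty X]
    (p : W → ℝ) (hp0 : ∀ w, 0 ≤ p w) (hp1 : ∑ w, p w = 1)
    (q : W → X → ℝ) (hq0 : ∀ w x, 0 ≤ q w x) (hq1 : ∀ w, ∑ x, q w x = 1)
    (loss : W × Wh → ℝ) (hloss : ∀ a, 0 ≤ loss a)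
    (φ : X → Wh) (ρ : ℝ) (hρ : 0 < ρ) :
    ρ * (1 - (⨆ wh : Wh, ∑ w ∈ Finset.univ.filter (fun w => loss (w, wh) < ρ), p w) *
        ∑ x, ⨆ w, q w x)
      ≤ ∑ w, ∑ x, p w * q w x * loss (w, φ x) := by
  haveI : Nonempty Wh := ⟨φ (Classical.arbitrary X)⟩
  set L := (⨆ wh : Wh, ∑ w ∈ Finset.univ.filter (fun w => loss (w, wh) < ρ), p w) with hLdef
  have hbdd : BddAbove (Set.range
      fun wh : Wh => ∑ w ∈ Finset.univ.filter (fun w => loss (w, wh) < ρ), p w) := by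
    refine ⟨1, ?_⟩
    rintro _ ⟨wh, rfl⟩
    calc ∑ w ∈ Finset.univ.filter (fun w => loss (w, wh) < ρ), p w
        ≤ ∑ w, p w := Finset.sum_le_sum_of_subset_of_nonneg
          (Finset.filter_subset _ _) (fun w _ _ => hp0 w)
      _ = 1 := hp1
  have hLge : ∀ wh : Wh, ∑ w ∈ Finset.univ.filter (fun w => loss (w, wh) < ρ), p w ≤ L :=
    fun wh => le_ciSup hbdd wh
  have hL0 : 0 ≤ L :=
    le_trans (Finset.sum_nonneg fun w _ => hp0 w) (hLge (Classical.arbitrary Wh))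
  have hqmax : ∀ w x, q w x ≤ ⨆ w', q w' x :=
    fun w x => le_ciSup (Set.Finite.bddAbove (Set.finite_range (fun w' => q w' x))) w
  have hsplit : ∀ x, ρ * ∑ w, p w * q w x ≤
      (∑ w, p w * q w x * loss (w, φ x)) + ρ * ((⨆ w, q w x) * L) := by
    intro x
    rw [Finset.mul_sum,
      ← Finset.sum_filter_add_sum_filter_not Finset.univ (fun w => loss (w, φ x) < ρ)]
    have hA : ∑ w ∈ Finset.univ.filter (fun w => ¬ loss (w, φ x) < ρ), ρ * (p w * q w x)
        ≤ ∑ w, p w * q w x * loss (w, φ x) := by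
      calc ∑ w ∈ Finset.univ.filter (fun w => ¬ loss (w, φ x) < ρ), ρ * (p w * q w x)
          ≤ ∑ w ∈ Finset.univ.filter (fun w => ¬ loss (w, φ x) < ρ),
            p w * q w x * loss (w, φ x) := by
            refine Finset.sum_le_sum fun w hw => ?_
            have h := not_lt.mp (Finset.mem_filter.mp hw).2
            have hpq : 0 ≤ p w * q w x := mul_nonneg (hp0 w) (hq0 w x)
            nlinarith [mul_nonneg (sub_nonneg.mpr h) hpq]
        _ ≤ ∑ w, p w * q w x * loss (w, φ x) :=
            Finset.sum_le_sum_of_subset_of_nonneg (Finset.filter_subset _ _)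
              (fun w _ _ => mul_nonneg (mul_nonneg (hp0 w) (hq0 w x)) (hloss _))
    have hB : ∑ w ∈ Finset.univ.filter (fun w => loss (w, φ x) < ρ), ρ * (p w * q w x)
        ≤ ρ * ((⨆ w, q w x) * L) := by
      rw [← Finset.mul_sum]
      refine mul_le_mul_of_nonneg_left ?_ hρ.le
      calc ∑ w ∈ Finset.univ.filter (fun w => loss (w, φ x) < ρ), p w * q w x
          ≤ ∑ w ∈ Finset.univ.filter (fun w => loss (w, φ x) < ρ), p w * (⨆ w', q w' x) :=
            Finset.sum_le_sum fun w _ =>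
              mul_le_mul_of_nonneg_left (hqmax w x) (hp0 w)
        _ = (∑ w ∈ Finset.univ.filter (fun w => loss (w, φ x) < ρ), p w) * (⨆ w', q w' x) := by
            rw [Finset.sum_mul]
        _ ≤ L * (⨆ w', q w' x) := by
            refine mul_le_mul_of_nonneg_right (hLge (φ x)) ?_
            exact le_trans (hq0 (Classical.arbitrary W) x) (hqmax _ x)
        _ = (⨆ w', q w' x) * L := mul_comm _ _
    linarith
  have h1 : (1:ℝ) = ∑ x, ∑ w, p w * q w x := by
    rw [Finset.sum_comm]
    simp_rw [← Finset.mul_sum, hq1, mul_one]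
    exact hp1.symm
  have hmain : ρ ≤ (∑ x, ∑ w, p w * q w x * loss (w, φ x))
      + ρ * ((∑ x, ⨆ w, q w x) * L) := by
    calc ρ = ∑ x, ρ * ∑ w, p w * q w x := by
          rw [← Finset.mul_sum, ← h1, mul_one]
      _ ≤ ∑ x, ((∑ w, p w * q w x * loss (w, φ x)) + ρ * ((⨆ w, q w x) * L)) :=
          Finset.sum_le_sum fun x _ => hsplit x
      _ = (∑ x, ∑ w, p w * q w x * loss (w, φ x))
          + ρ * ((∑ x, ⨆ w, q w x) * L) := by
          rw [Finset.sum_add_distrib, ← Finset.mul_sum, ← Finset.sum_mul]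
  rw [Finset.sum_comm]
  nlinarith [hmain]
end

section
/- For every natural number n ≥ 1, Σ_{k=0}^{n} C(n,k) · (k/n)^k · ((n−k)/n)^{n−k} ≤ 2 + √(π n / 2), where C(n,k) is the binomial coefficient, the powers are natural powers of real numbers, and the summand is interpreted with 0^0 = 1 (so the k = 0 and k = n terms each equal 1). -/
/-!
Write `n! = sₙ √(2n) (n/e)ⁿ` with Stirling's sequence `s`. For `0 < k < n` the `k`-th summand
equals `sₙ / (sₖ sₙ₋ₖ) · √(n / (2k(n-k)))`, and since `s` decreases to `√π` on positive indices,
`sₙ / (sₖ sₙ₋ₖ) ≤ sₖ / (sₖ · √π) = 1/√π`. Hence the summand is at most `√(n/(2π)) / √(k(n-k))`.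
The sum of `1/√(k(n-k))` over `0 < k < n` is at most `∫₀ⁿ dx / √(x(n-x)) = π`: the integrand is
monotone on either side of `n/2`, so by the mean value theorem each summand is dominated by the
increment of the primitive `arcsin (2x/n - 1)` over the adjacent unit interval away from `n/2`.
The summands `k = 0` and `k = n` equal `1`.
-/

open Real Finset Nat Stirling

lemma factorial_eq_stirlingSeq_mul {m : ℕ} (hm : m ≠ 0) :
    (m ! : ℝ) = stirlingSeq m * (√(2 * m) * (m / exp 1) ^ m) := by
  rw [stirlingSeq, div_mul_cancel₀ _ (by positivity)]

lemma add_choose_mul_pow_mul_pow_eq {k j : ℕ} (hk : k ≠ 0) (hj : j ≠ 0) :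
    ((k + j).choose k : ℝ) * (k / (k + j : ℕ)) ^ k * (j / (k + j : ℕ)) ^ j
      = stirlingSeq (k + j) / (stirlingSeq k * stirlingSeq j) * √((k + j) / (2 * k * j)) := by
  have hsk : stirlingSeq k ≠ 0 := (sqrt_pi_le_stirlingSeq hk).trans_lt' (by positivity) |>.ne'
  have hsj : stirlingSeq j ≠ 0 := (sqrt_pi_le_stirlingSeq hj).trans_lt' (by positivity) |>.ne'
  have hsqrt : √((k + j) / (2 * k * j) : ℝ) = √(2 * (k + j : ℕ)) / (√(2 * k) * √(2 * j)) := by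
    rw [← sqrt_mul (by positivity), ← sqrt_div' _ (by positivity)]
    congr 1; push_cast; field_simp
  rw [Nat.cast_add_choose, factorial_eq_stirlingSeq_mul (by omega), factorial_eq_stirlingSeq_mul hk,
    factorial_eq_stirlingSeq_mul hj, hsqrt, div_pow, div_pow, div_pow, div_pow, div_pow, pow_add,
    pow_add, Nat.cast_add]
  have hk' : (0 : ℝ) < k := by positivity
  have hj' : (0 : ℝ) < j := by positivity
  field_simp

lemma stirlingSeq_add_div_mul_le {k j : ℕ} (hk : k ≠ 0) (hj : j ≠ 0) :
    stirlingSeq (k + j) / (stirlingSeq k * stirlingSeq j) ≤ (√π)⁻¹ := by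
  obtain ⟨k, rfl⟩ := Nat.exists_eq_succ_of_ne_zero hk
  have hsk := stirlingSeq'_pos k
  have hsj := sqrt_pi_le_stirlingSeq hj
  have hanti : stirlingSeq (k + 1 + j) ≤ stirlingSeq (k + 1) := by
    simpa [Nat.add_right_comm] using stirlingSeq'_antitone (Nat.le_add_right k j)
  calc stirlingSeq (k + 1 + j) / (stirlingSeq (k + 1) * stirlingSeq j)
      ≤ stirlingSeq (k + 1) / (stirlingSeq (k + 1) * stirlingSeq j) := by
        gcongr
        exact mul_pos hsk (hsj.trans_lt' (by positivity)) |>.le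
    _ = (stirlingSeq j)⁻¹ := by field_simp
    _ ≤ (√π)⁻¹ := inv_anti₀ (by positivity) hsj

lemma choose_mul_pow_mul_pow_le {n k : ℕ} (hk : k ≠ 0) (hkn : k < n) :
    (n.choose k : ℝ) * ((k : ℝ) / n) ^ k * (((n - k : ℕ) : ℝ) / n) ^ (n - k)
      ≤ √(n / (2 * π)) * (√(k * (n - k)))⁻¹ := by
  obtain ⟨j, rfl⟩ := Nat.exists_eq_add_of_le hkn.le
  have hj : j ≠ 0 := by omega
  rw [Nat.add_sub_cancel_left, add_choose_mul_pow_mul_pow_eq hk hj]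
  calc _ ≤ (√π)⁻¹ * √((k + j) / (2 * k * j)) := by
        gcongr
        exact stirlingSeq_add_div_mul_le hk hj
    _ = √((k + j : ℕ) / (2 * π)) * (√(k * ((k + j : ℕ) - k)))⁻¹ := by
        rw [Nat.cast_add, add_sub_cancel_left, ← sqrt_inv, ← sqrt_inv,
          ← sqrt_mul' _ (by positivity), ← sqrt_mul' _ (by positivity)]
        congr 1
        field_simp

lemma hasDerivAt_arcsin_two_mul_div_sub_one {n x : ℝ} (hx : 0 < x) (hxn : x < n) :
    HasDerivAt (fun y ↦ arcsin (2 * y / n - 1)) (√(x * (n - x)))⁻¹ x := by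
  have hn : 0 < n := hx.trans hxn
  have hinner : HasDerivAt (fun y ↦ 2 * y / n - 1) (2 / n) x := by
    simpa using ((hasDerivAt_id x).const_mul 2).div_const n |>.sub_const 1
  have hlo : 2 * x / n - 1 ≠ -1 := by
    have : 0 < 2 * x / n := by positivity
    linarith
  have hhi : 2 * x / n - 1 ≠ 1 := by
    have : 2 * x / n < 2 := by rw [div_lt_iff₀ hn]; linarith
    linarith
  refine ((hasDerivAt_arcsin hlo hhi).comp x hinner).congr_deriv ?_
  have hsq : 1 - (2 * x / n - 1) ^ 2 = (2 / n) ^ 2 * (x * (n - x)) := by field_simp; ring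
  rw [hsq, sqrt_mul' _ (by nlinarith), sqrt_sq (by positivity)]
  field_simp

lemma inv_sqrt_le_arcsin_sub {n a k : ℝ} (ha : 0 ≤ a) (han : a + 1 ≤ n)
    (hk : ∀ c ∈ Set.Ioo a (a + 1), c * (n - c) ≤ k * (n - k)) :
    (√(k * (n - k)))⁻¹ ≤ arcsin (2 * (a + 1) / n - 1) - arcsin (2 * a / n - 1) := by
  obtain ⟨c, hc, hslope⟩ := exists_hasDerivAt_eq_slope (fun y ↦ arcsin (2 * y / n - 1))
    (fun y ↦ (√(y * (n - y)))⁻¹) (lt_add_one a) (by fun_prop)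
    fun x hx ↦ hasDerivAt_arcsin_two_mul_div_sub_one (by linarith [hx.1]) (by linarith [hx.2])
  rw [add_sub_cancel_left, div_one] at hslope
  rw [← hslope]
  have hc_pos : 0 < c * (n - c) := mul_pos (by linarith [hc.1]) (by linarith [hc.2])
  exact inv_anti₀ (sqrt_pos.2 hc_pos) (sqrt_le_sqrt (hk c hc))

lemma sum_Ico_inv_sqrt_mul_sub_le_pi (n : ℕ) :
    ∑ k ∈ Ico 1 n, (√(k * (n - k)))⁻¹ ≤ π := by
  rcases Nat.eq_zero_or_pos n with rfl | hn
  · simpa using pi_pos.le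
  set G : ℕ → ℝ := fun i ↦ arcsin (2 * i / n - 1)
  set m := n / 2
  have hleft : ∀ i ∈ Ico 0 m, (√((i + 1 : ℕ) * (n - (i + 1 : ℕ))))⁻¹ ≤ G (i + 1) - G i := by
    intro i hi
    rw [Finset.mem_Ico] at hi
    have hin : 2 * ((i : ℝ) + 1) ≤ n := by exact_mod_cast (by omega : 2 * (i + 1) ≤ n)
    have := inv_sqrt_le_arcsin_sub (n := n) (k := i + 1) i.cast_nonneg (by linarith)
      fun c hc ↦ by nlinarith [hc.1, hc.2]
    simpa only [G, Nat.cast_add, Nat.cast_one] using this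
  have hright : ∀ k ∈ Ico (m + 1) n, (√(k * (n - k)))⁻¹ ≤ G (k + 1) - G k := by
    intro k hk
    rw [Finset.mem_Ico] at hk
    have hkn : (k : ℝ) + 1 ≤ n := by exact_mod_cast hk.2
    have hk2 : (n : ℝ) ≤ 2 * k := by exact_mod_cast (by omega : n ≤ 2 * k)
    have := inv_sqrt_le_arcsin_sub (k := k) k.cast_nonneg hkn fun c hc ↦ by nlinarith [hc.1, hc.2]
    simpa only [G, Nat.cast_add, Nat.cast_one] using this
  have hmid : G m ≤ G (m + 1) := by
    simp only [G]; gcongr; simp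
  have hG0 : G 0 = -(π / 2) := by simp [G]
  have hGn : G n = π / 2 := by norm_num [G, mul_div_assoc, hn.ne']
  calc ∑ k ∈ Ico 1 n, (√(k * (n - k)))⁻¹
      = ∑ i ∈ Ico 0 m, (√((i + 1 : ℕ) * (n - (i + 1 : ℕ))))⁻¹
          + ∑ k ∈ Ico (m + 1) n, (√(k * (n - k)))⁻¹ := by
        rw [← Finset.sum_Ico_consecutive _ (by omega : 1 ≤ m + 1) (by omega : m + 1 ≤ n),
          Finset.sum_Ico_add' (fun k : ℕ ↦ (√(k * (n - k)))⁻¹ : ℕ → ℝ)]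
    _ ≤ (G m - G 0) + (G n - G (m + 1)) := by
        gcongr
        · exact (sum_le_sum hleft).trans_eq (sum_Ico_sub G (Nat.zero_le m))
        · exact (sum_le_sum hright).trans_eq (sum_Ico_sub G (by omega))
    _ ≤ π := by linarith

/-- Upper bound on the exponentiated maximal leakage for `n` Bernoulli samples with
uniform prior on the bias:
`Σ_{k=0}^n C(n,k) (k/n)^k ((n−k)/n)^{n−k} ≤ 2 + √(πn/2)`. -/
theorem bernoulli_leakage_sum_le (n : ℕ) (hn : 1 ≤ n) :
    ∑ k ∈ Finset.range (n + 1),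
        (n.choose k : ℝ) * ((k : ℝ) / n) ^ k * (((n - k : ℕ) : ℝ) / n) ^ (n - k)
      ≤ 2 + Real.sqrt (Real.pi * n / 2) := by
  have hn' : (n : ℝ) ≠ 0 := by positivity
  rw [range_eq_Ico, sum_eq_sum_Ico_succ_bot (Nat.succ_pos n), sum_Ico_succ_top hn]
  calc _ ≤ 1 + (∑ k ∈ Ico 1 n, √(n / (2 * π)) * (√(k * (n - k)))⁻¹ + 1) := by
        gcongr ?_ + (∑ k ∈ _, ?_ + ?_) with k hk
        · simp [hn']
        · obtain ⟨hk1, hkn⟩ := mem_Ico.1 hk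
          exact choose_mul_pow_mul_pow_le (Nat.one_le_iff_ne_zero.1 hk1) hkn
        · simp [hn']
    _ ≤ 2 + √(n / (2 * π)) * π := by
        have := mul_le_mul_of_nonneg_left (sum_Ico_inv_sqrt_mul_sub_le_pi n)
          (sqrt_nonneg (n / (2 * π)))
        rw [← mul_sum]
        linarith
    _ = 2 + √(π * n / 2) := by
        rw [← sqrt_sq pi_pos.le, ← sqrt_mul (by positivity), sqrt_sq pi_pos.le]
        congr 2
        field_simp
end

section
/- For every natural number n ≥ 1: (n+1) · Σ_{k=0}^{n} C(n,k)² · ∫_0^1 w^{2k} (1−w)^{2(n−k)} dw = ((n+1)/(2n+1)) · 4^n / C(2n,n), and moreover ((n+1)/(2n+1)) · 4^n / C(2n,n) ≤ 16·√(π n)/21. -/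
/-!
Since `Ring.choose (-1/2) k = (-1/4)ᵏ C(2k,k)`, Vandermonde's identity at `-1/2 + -1/2 = -1`
gives `∑ₖ C(2k,k) C(2(n-k),n-k) = 4ⁿ`. The Beta integral
`∫₀¹ w^{2k} (1-w)^{2(n-k)} = (2k)! (2(n-k))! / (2n+1)!` turns the `k`-th summand into
`C(2k,k) C(2(n-k),n-k) / ((2n+1) C(2n,n))`, which gives the closed form. The bound follows from
`4ⁿ ≤ 2√n C(2n,n)` (an induction on `16ⁿ ≤ 4n C(2n,n)²`), `(n+1)/(2n+1) ≤ 2/3` and `π ≥ 49/16`.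
-/

open Finset Polynomial

theorem Ring.choose_neg_one {R : Type*} [Ring R] [BinomialRing R] (n : ℕ) :
    Ring.choose (-1 : R) n = (-1) ^ n := by
  rw [Ring.choose_neg, add_sub_cancel_left, Ring.choose_natCast, Nat.choose_self, Nat.cast_one]
  simp [Int.negOnePow_def, Units.smul_def]

theorem descPochhammer_smeval_neg_half {K : Type*} [Field K] [CharZero K] (n : ℕ) :
    (descPochhammer ℤ n).smeval (-(1 / 2) : K) = (-1 / 4) ^ n * n.factorial * n.centralBinom := by
  induction n with
  | zero => simp
  | succ n ih =>
    have hrec : ((n + 1 : ℕ) : K) * (n + 1).centralBinom = 2 * (2 * n + 1) * n.centralBinom := by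
      exact_mod_cast n.succ_mul_centralBinom_succ
    rw [descPochhammer_succ_right, smeval_mul, ih, smeval_sub, smeval_X, smeval_natCast,
      Nat.factorial_succ]
    push_cast at hrec ⊢
    linear_combination (1 / 4) * (-1 / 4) ^ n * n.factorial * hrec

theorem Ring.choose_neg_half {K : Type*} [Field K] [CharZero K] (n : ℕ) :
    Ring.choose (-(1 / 2) : K) n = (-1 / 4) ^ n * n.centralBinom := by
  have : (n.factorial : K) ≠ 0 := Nat.cast_ne_zero.mpr n.factorial_ne_zero
  rw [Ring.choose_eq_smul, descPochhammer_smeval_neg_half, smul_eq_mul]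
  field_simp

theorem Nat.sum_range_centralBinom_mul_centralBinom (n : ℕ) :
    ∑ k ∈ range (n + 1), k.centralBinom * (n - k).centralBinom = 4 ^ n := by
  rw [← Nat.sum_antidiagonal_eq_sum_range_succ fun i j ↦ i.centralBinom * j.centralBinom]
  have hvdm := Ring.add_choose_eq (r := (-(1 / 2) : ℚ)) (s := -(1 / 2)) n (Commute.all _ _)
  rw [show (-(1 / 2) + -(1 / 2) : ℚ) = -1 by norm_num, Ring.choose_neg_one] at hvdm
  have hterm : ∀ ij ∈ antidiagonal n, Ring.choose (-(1 / 2) : ℚ) ij.1 * Ring.choose (-(1 / 2)) ij.2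
      = (-1 / 4) ^ n * (ij.1.centralBinom * ij.2.centralBinom : ℕ) := by
    rintro ⟨i, j⟩ hij
    rw [HasAntidiagonal.mem_antidiagonal] at hij
    rw [Ring.choose_neg_half, Ring.choose_neg_half, ← hij, pow_add]
    push_cast
    ring
  rw [sum_congr rfl hterm, ← mul_sum, ← Nat.cast_sum] at hvdm
  have hneg : ((-1 / 4) ^ n * 4 ^ n : ℚ) = (-1) ^ n := by rw [← mul_pow]; norm_num
  exact_mod_cast mul_left_cancel₀ (by positivity) (hvdm.symm.trans hneg.symm)

theorem Nat.centralBinom_mul_factorial_sq (m : ℕ) :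
    m.centralBinom * m.factorial ^ 2 = (2 * m).factorial := by
  rw [Nat.centralBinom_eq_two_mul_choose, sq, ← mul_assoc]
  convert Nat.choose_mul_factorial_mul_factorial (by omega : m ≤ 2 * m) using 3
  omega

theorem Nat.four_pow_sq_le_mul_centralBinom_sq {n : ℕ} (hn : 0 < n) :
    (4 ^ n) ^ 2 ≤ 4 * n * n.centralBinom ^ 2 := by
  induction n, hn using Nat.le_induction with
  | base => decide
  | succ n _ ih =>
    suffices (n + 1) * (4 ^ (n + 1)) ^ 2 ≤ (n + 1) * (4 * (n + 1) * (n + 1).centralBinom ^ 2) from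
      Nat.le_of_mul_le_mul_left this n.succ_pos
    calc (n + 1) * (4 ^ (n + 1)) ^ 2 = 16 * (n + 1) * (4 ^ n) ^ 2 := by ring
      _ ≤ 16 * (n + 1) * (4 * n * n.centralBinom ^ 2) := by gcongr
      _ ≤ 16 * (2 * n + 1) ^ 2 * n.centralBinom ^ 2 := by nlinarith
      _ = 4 * ((n + 1) * (n + 1).centralBinom) ^ 2 := by rw [n.succ_mul_centralBinom_succ]; ring
      _ = (n + 1) * (4 * (n + 1) * (n + 1).centralBinom ^ 2) := by ring

theorem Nat.four_pow_div_centralBinom_le {n : ℕ} (hn : 0 < n) :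
    (4 : ℝ) ^ n / n.centralBinom ≤ 2 * √n := by
  have hC : (0 : ℝ) < n.centralBinom := by exact_mod_cast n.centralBinom_pos
  rw [div_le_iff₀ hC, ← pow_le_pow_iff_left₀ (by positivity) (by positivity) two_ne_zero,
    mul_pow, mul_pow, Real.sq_sqrt n.cast_nonneg]
  exact_mod_cast Nat.four_pow_sq_le_mul_centralBinom_sq hn

theorem integral_pow_mul_one_sub_pow (a b : ℕ) :
    ∫ x in (0 : ℝ)..1, x ^ a * (1 - x) ^ b = a.factorial * b.factorial / (a + b + 1).factorial := by
  have hbeta := Complex.betaIntegral_eq_Gamma_mul_div (a + 1) (b + 1)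
    (by simp; positivity) (by simp; positivity)
  rw [show (a + 1 + (b + 1) : ℂ) = (a + b + 1 : ℕ) + 1 by push_cast; ring,
    Complex.Gamma_nat_eq_factorial, Complex.Gamma_nat_eq_factorial,
    Complex.Gamma_nat_eq_factorial, Complex.betaIntegral] at hbeta
  apply Complex.ofReal_injective
  rw [← intervalIntegral.integral_ofReal]
  push_cast
  simpa only [add_sub_cancel_right, Complex.cpow_natCast] using hbeta

theorem choose_sq_mul_integral_pow_mul_one_sub_pow {n k : ℕ} (hk : k ≤ n) :
    (n.choose k : ℝ) ^ 2 * ∫ w in (0 : ℝ)..1, w ^ (2 * k) * (1 - w) ^ (2 * (n - k))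
      = k.centralBinom * (n - k).centralBinom / ((2 * n + 1) * n.centralBinom) := by
  rw [integral_pow_mul_one_sub_pow, show 2 * k + 2 * (n - k) + 1 = 2 * n + 1 by omega,
    Nat.factorial_succ, ← k.centralBinom_mul_factorial_sq, ← (n - k).centralBinom_mul_factorial_sq,
    ← n.centralBinom_mul_factorial_sq, ← Nat.choose_mul_factorial_mul_factorial hk]
  have := Nat.choose_pos hk
  have := n.centralBinom_pos
  have := k.factorial_pos
  have := (n - k).factorial_pos
  push_cast
  field_simp

theorem sum_choose_sq_mul_integral_pow_mul_one_sub_pow (n : ℕ) :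
    ∑ k ∈ range (n + 1), (n.choose k : ℝ) ^ 2 *
        ∫ w in (0 : ℝ)..1, w ^ (2 * k) * (1 - w) ^ (2 * (n - k))
      = 4 ^ n / ((2 * n + 1) * n.centralBinom) := by
  rw [sum_congr rfl fun k hk ↦ choose_sq_mul_integral_pow_mul_one_sub_pow
    (Nat.lt_succ_iff.mp (mem_range.mp hk)), ← sum_div]
  congr 1
  exact_mod_cast n.sum_range_centralBinom_mul_centralBinom

/-- Closed form for the chi-squared mutual information (plus one) between a uniform
Bernoulli bias and `n` samples, and its upper bound:
`(n+1) Σ_k C(n,k)² ∫₀¹ w^{2k}(1−w)^{2(n−k)} dw = ((n+1)/(2n+1))·4ⁿ/C(2n,n) ≤ 16√(πn)/21`. -/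
theorem bernoulli_chi_squared_closed_form (n : ℕ) (hn : 1 ≤ n) :
    ((n : ℝ) + 1) * ∑ k ∈ Finset.range (n + 1), (n.choose k : ℝ) ^ 2 *
          ∫ w in (0 : ℝ)..1, w ^ (2 * k) * (1 - w) ^ (2 * (n - k))
        = (((n : ℝ) + 1) / (2 * n + 1)) * 4 ^ n / ((2 * n).choose n : ℝ) ∧
      (((n : ℝ) + 1) / (2 * n + 1)) * 4 ^ n / ((2 * n).choose n : ℝ)
        ≤ 16 * Real.sqrt (Real.pi * n) / 21 := by
  rw [← Nat.centralBinom_eq_two_mul_choose, sum_choose_sq_mul_integral_pow_mul_one_sub_pow]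
  refine ⟨by field_simp, ?_⟩
  have hratio : ((n : ℝ) + 1) / (2 * n + 1) ≤ 2 / 3 := by
    rw [div_le_iff₀ (by positivity)]
    linarith [(Nat.one_le_cast (α := ℝ)).mpr hn]
  have hsqrt_pi : (7 / 4 : ℝ) ≤ √Real.pi := by
    rw [Real.le_sqrt (by norm_num) Real.pi_pos.le]
    linarith [Real.pi_gt_d2]
  calc ((n : ℝ) + 1) / (2 * n + 1) * 4 ^ n / n.centralBinom
      = ((n : ℝ) + 1) / (2 * n + 1) * (4 ^ n / n.centralBinom) := mul_div_assoc ..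
    _ ≤ 2 / 3 * (2 * √n) :=
      mul_le_mul hratio (Nat.four_pow_div_centralBinom_le hn) (by positivity) (by norm_num)
    _ ≤ 16 * (√Real.pi * √n) / 21 := by nlinarith [Real.sqrt_nonneg n]
    _ = 16 * √(Real.pi * n) / 21 := by rw [Real.sqrt_mul Real.pi_pos.le]
end

section
/- Let σ_W > 0, σ > 0, and let p > 1 be a real number with 1 + (2−p)·p·σ_W²/σ² > 0. Writing φ_s(u) = (2π s²)^{−1/2} exp(−u²/(2s²)) for the centered Gaussian density with standard deviation s, one has ∫_ℝ ∫_ℝ φ_{σ_W}(w) · φ_σ(x − w)^p · φ_{√(σ_W² + σ²)}(x)^{1−p} dw dx = ( (1 + σ_W²/σ²)^p / (1 + (2−p)·p·σ_W²/σ²) )^{1/2}. -/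
/-!
The integrand is a constant times `exp (-(a w² + b w x + c x²))`, a quadratic form with
discriminant `4ac - b² = (1 + (2 - p) p σ_W² / σ²) / (σ_W² (σ_W² + σ²))`; so it is positive definite
exactly when `1 + (2 - p) p σ_W² / σ² > 0`. Completing the square in `w` and then integrating the
remaining Gaussian in `x` gives `2π / √(4ac - b²)`, and together with the normalising constants of
the three densities this is `(1 + σ_W² / σ²) ^ (p / 2) / √(1 + (2 - p) p σ_W² / σ²)`.
-/

open Real

/-- The centered Gaussian density with standard deviation `s`. -/
noncomputable def gaussianPdf (s u : ℝ) : ℝ :=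
  (Real.sqrt (2 * Real.pi * s ^ 2))⁻¹ * Real.exp (-u ^ 2 / (2 * s ^ 2))

open MeasureTheory

theorem integral_exp_neg_mul_sq_add_mul {a : ℝ} (ha : 0 < a) (b : ℝ) :
    ∫ w : ℝ, exp (-a * w ^ 2 + b * w) = √(π / a) * exp (b ^ 2 / (4 * a)) := by
  have complete_square (w : ℝ) :
      -a * w ^ 2 + b * w = -a * (w - b / (2 * a)) ^ 2 + b ^ 2 / (4 * a) := by
    field_simp; ring
  simp_rw [complete_square, exp_add, integral_mul_const]
  rw [integral_sub_right_eq_self (fun w ↦ exp (-a * w ^ 2)), integral_gaussian]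

theorem integral_integral_exp_neg_quadratic {a c : ℝ} (ha : 0 < a) (b : ℝ)
    (hdisc : b ^ 2 < 4 * a * c) :
    ∫ x : ℝ, ∫ w : ℝ, exp (-(a * w ^ 2 + b * w * x + c * x ^ 2))
      = 2 * π / √(4 * a * c - b ^ 2) := by
  have hdisc' : 0 < 4 * a * c - b ^ 2 := by linarith
  have inner (x : ℝ) : ∫ w : ℝ, exp (-(a * w ^ 2 + b * w * x + c * x ^ 2))
      = √(π / a) * exp (-((4 * a * c - b ^ 2) / (4 * a)) * x ^ 2) := by
    have split (w : ℝ) : exp (-(a * w ^ 2 + b * w * x + c * x ^ 2))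
        = exp (-a * w ^ 2 + (-b * x) * w) * exp (-c * x ^ 2) := by
      rw [← exp_add]; ring_nf
    simp_rw [split, integral_mul_const, integral_exp_neg_mul_sq_add_mul ha, mul_assoc,
      ← exp_add]
    congr 2
    field_simp
    ring
  simp_rw [inner, integral_const_mul, integral_gaussian, ← sqrt_mul (div_pos pi_pos ha).le]
  rw [show π / a * (π / ((4 * a * c - b ^ 2) / (4 * a))) = (2 * π) ^ 2 / (4 * a * c - b ^ 2) by
      field_simp; ring,
    sqrt_div' _ hdisc'.le, sqrt_sq (by positivity)]

theorem rpow_neg_div_two_mul_rpow {x y : ℝ} (hx : 0 < x) (hy : 0 < y) (p : ℝ) :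
    x ^ (-p / 2) * y ^ (-(1 - p) / 2) = (√y)⁻¹ * (y / x) ^ (p / 2) := by
  rw [div_rpow hy.le hx.le, sqrt_eq_rpow, ← rpow_neg hy.le,
    show -(1 - p) / 2 = -(1 / 2) + p / 2 by ring, rpow_add hy, neg_div, rpow_neg hx.le]
  ring

theorem sqrt_mul_mul_sqrt_mul {c u : ℝ} (hc : 0 ≤ c) (hu : 0 ≤ u) (v : ℝ) :
    √(c * u) * √(c * v) = c * √(u * v) := by
  rw [← sqrt_mul (mul_nonneg hc hu), show c * u * (c * v) = c ^ 2 * (u * v) by ring,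
    sqrt_mul (sq_nonneg c), sqrt_sq hc]

theorem one_add_mul_pos_of_one_add_two_sub_mul_mul_pos {p t : ℝ} (ht : 0 ≤ t)
    (h : 0 < 1 + (2 - p) * p * t) : 0 < 1 + p * t := by
  nlinarith [mul_nonneg ht (sq_nonneg p)]

theorem gaussianPdf_rpow (s u q : ℝ) :
    gaussianPdf s u ^ q = (2 * π * s ^ 2) ^ (-q / 2) * exp (-q * u ^ 2 / (2 * s ^ 2)) := by
  rw [gaussianPdf, mul_rpow (by positivity) (exp_pos _).le, ← exp_mul, sqrt_eq_rpow,
    ← rpow_neg_one, ← rpow_mul (by positivity), ← rpow_mul (by positivity)]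
  congr 2 <;> ring

theorem gaussianPdf_mul_rpow_mul_rpow {σW σ : ℝ} (hσ : σ ≠ 0) (p x w : ℝ) :
    gaussianPdf σW w * gaussianPdf σ (x - w) ^ p * gaussianPdf (√(σW ^ 2 + σ ^ 2)) x ^ (1 - p)
      = (√(2 * π * σW ^ 2))⁻¹ * (√(2 * π * (σW ^ 2 + σ ^ 2)))⁻¹ *
          (1 + σW ^ 2 / σ ^ 2) ^ (p / 2) *
        exp (-((1 / (2 * σW ^ 2) + p / (2 * σ ^ 2)) * w ^ 2 + (-p / σ ^ 2) * w * x +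
          (p / (2 * σ ^ 2) + (1 - p) / (2 * (σW ^ 2 + σ ^ 2))) * x ^ 2)) := by
  have hσ2 : 0 < σ ^ 2 := by positivity
  have hτ2 : 0 < σW ^ 2 + σ ^ 2 := by positivity
  rw [gaussianPdf_rpow, gaussianPdf_rpow, sq_sqrt hτ2.le, gaussianPdf]
  calc _ = (√(2 * π * σW ^ 2))⁻¹ *
        ((2 * π * σ ^ 2) ^ (-p / 2) * (2 * π * (σW ^ 2 + σ ^ 2)) ^ (-(1 - p) / 2)) *
        exp (-w ^ 2 / (2 * σW ^ 2) + -p * (x - w) ^ 2 / (2 * σ ^ 2) +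
          -(1 - p) * x ^ 2 / (2 * (σW ^ 2 + σ ^ 2))) := by
        rw [exp_add, exp_add]; ring
    _ = _ := by
      rw [rpow_neg_div_two_mul_rpow (by positivity) (by positivity),
        show 2 * π * (σW ^ 2 + σ ^ 2) / (2 * π * σ ^ 2) = 1 + σW ^ 2 / σ ^ 2 by
          field_simp; ring,
        ← mul_assoc]
      congr 2
      ring

theorem gaussian_hellinger_discriminant {σW σ : ℝ} (hσW : σW ≠ 0) (hσ : σ ≠ 0) (p : ℝ) :
    4 * (1 / (2 * σW ^ 2) + p / (2 * σ ^ 2)) *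
        (p / (2 * σ ^ 2) + (1 - p) / (2 * (σW ^ 2 + σ ^ 2))) - (-p / σ ^ 2) ^ 2
      = (1 + (2 - p) * p * σW ^ 2 / σ ^ 2) / (σW ^ 2 * (σW ^ 2 + σ ^ 2)) := by
  have hτ2 : σW ^ 2 + σ ^ 2 ≠ 0 := by positivity
  field_simp
  ring

theorem gaussian_hellinger_closed_form_general
    (σW σ : ℝ) (hσW : 0 < σW) (hσ : 0 < σ)
    (p : ℝ) (hden : 0 < 1 + (2 - p) * p * σW ^ 2 / σ ^ 2) :
    ∫ x : ℝ, ∫ w : ℝ,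
        gaussianPdf σW w * gaussianPdf σ (x - w) ^ p *
          gaussianPdf (Real.sqrt (σW ^ 2 + σ ^ 2)) x ^ (1 - p)
      = ((1 + σW ^ 2 / σ ^ 2) ^ p / (1 + (2 - p) * p * σW ^ 2 / σ ^ 2)) ^ ((1 : ℝ) / 2) := by
  have ha : 0 < 1 / (2 * σW ^ 2) + p / (2 * σ ^ 2) := by
    have := one_add_mul_pos_of_one_add_two_sub_mul_mul_pos (by positivity : 0 ≤ σW ^ 2 / σ ^ 2)
      (by rwa [← mul_div_assoc])
    rw [show 1 / (2 * σW ^ 2) + p / (2 * σ ^ 2) = (1 + p * (σW ^ 2 / σ ^ 2)) / (2 * σW ^ 2) by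
      field_simp]
    positivity
  have hdisc := gaussian_hellinger_discriminant hσW.ne' hσ.ne' p
  have hdisc_pos : (-p / σ ^ 2) ^ 2 < 4 * (1 / (2 * σW ^ 2) + p / (2 * σ ^ 2)) *
      (p / (2 * σ ^ 2) + (1 - p) / (2 * (σW ^ 2 + σ ^ 2))) := by
    rw [← sub_pos, hdisc]; positivity
  simp_rw [gaussianPdf_mul_rpow_mul_rpow hσ.ne', integral_const_mul,
    integral_integral_exp_neg_quadratic ha _ hdisc_pos, hdisc]
  rw [div_rpow (by positivity) hden.le, ← rpow_mul (by positivity), ← sqrt_eq_rpow,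
    sqrt_div hden.le, div_div_eq_mul_div,
    ← sqrt_mul_mul_sqrt_mul (by positivity : (0 : ℝ) ≤ 2 * π) (sq_nonneg σW), mul_one_div]
  field_simp

/-- Closed form for `(p−1)·ℋ_p(W,X) + 1` in the Gaussian-prior Gaussian-noise model:
`∫∫ φ_{σ_W}(w) φ_σ(x−w)^p φ_{√(σ_W²+σ²)}(x)^{1−p} dw dx
  = ((1+σ_W²/σ²)^p / (1+(2−p)p σ_W²/σ²))^{1/2}`. -/
theorem gaussian_hellinger_closed_form
    (σW σ : ℝ) (hσW : 0 < σW) (hσ : 0 < σ)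
    (p : ℝ) (hp : 1 < p) (hden : 0 < 1 + (2 - p) * p * σW ^ 2 / σ ^ 2) :
    ∫ x : ℝ, ∫ w : ℝ,
        gaussianPdf σW w * gaussianPdf σ (x - w) ^ p *
          gaussianPdf (Real.sqrt (σW ^ 2 + σ ^ 2)) x ^ (1 - p)
      = ((1 + σW ^ 2 / σ ^ 2) ^ p / (1 + (2 - p) * p * σW ^ 2 / σ ^ 2)) ^ ((1 : ℝ) / 2) :=
  gaussian_hellinger_closed_form_general σW σ hσW hσ p hden
end

section
/- Let d ≥ 1 and N ≥ 1 be natural numbers and let 0 ≤ θ ≤ 1/2. For w ∈ Fin d, let P_w be the probability mass function on ({0,1}^d)^N under which the N vectors are i.i.d., with all coordinates independent, coordinate w distributed Bernoulli(1/2 + θ) and every other coordinate Bernoulli(1/2). Then for every function ψ : ({0,1}^d)^N → Fin d, (1/d) · Σ_{w ∈ Fin d} Σ_{x : ψ(x) ≠ w} P_w(x) ≥ 1 − (1 + 2θ)^N / d. -/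
/-!
Write `P w` for the law of the sample when coordinate `w` is biased. Since each `P w` has total
mass one, the error mass `∑ w, P w {ψ ≠ w}` equals `d - ∑ x, P (ψ x) x`. Every single observation
has probability at most `(1 + 2θ) / 2 ^ d` under every `P w`, so over the `2 ^ (d N)` samples
`∑ x, P (ψ x) x ≤ 2 ^ (d N) ((1 + 2θ) / 2 ^ d) ^ N = (1 + 2θ) ^ N`. The factor `1 + 2θ = 2 ^ d · max_{w, y} P_w(y)` is the
exponential of the maximal leakage of one observation about `w`, and it multiplies over the `N`
independent observations.
-/

open Finset

section Misclassification

variable {W X : Type*} [Fintype W] [Fintype X] [DecidableEq W]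

def misclassificationMass (P : W → X → ℝ) (ψ : X → W) : ℝ :=
  ∑ w, ∑ x ∈ univ.filter (fun x => ψ x ≠ w), P w x

lemma misclassificationMass_eq_card_sub (P : W → X → ℝ) (hP : ∀ w, ∑ x, P w x = 1)
    (ψ : X → W) :
    misclassificationMass P ψ = Fintype.card W - ∑ x, P (ψ x) x := by
  have hmiss : ∀ w, ∑ x ∈ univ.filter (fun x => ψ x ≠ w), P w x
      = 1 - ∑ x ∈ univ.filter (fun x => ψ x = w), P w x := by
    intro w
    rw [← hP w, ← sum_filter_add_sum_filter_not univ (fun x => ψ x = w)]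
    ring
  have hhit : ∑ w, ∑ x ∈ univ.filter (fun x => ψ x = w), P w x = ∑ x, P (ψ x) x := by
    rw [← sum_fiberwise univ ψ (fun x => P (ψ x) x)]
    refine sum_congr rfl fun w _ => sum_congr rfl fun x hx => ?_
    rw [(mem_filter.1 hx).2]
  rw [misclassificationMass, sum_congr rfl fun w _ => hmiss w, sum_sub_distrib, hhit]
  simp

lemma card_sub_card_mul_le_misclassificationMass (P : W → X → ℝ)
    (hP : ∀ w, ∑ x, P w x = 1) {M : ℝ} (hM : ∀ w x, P w x ≤ M) (ψ : X → W) :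
    Fintype.card W - Fintype.card X * M ≤ misclassificationMass P ψ := by
  have hhit : ∑ x, P (ψ x) x ≤ Fintype.card X * M := by
    simpa using sum_le_card_nsmul univ (fun x => P (ψ x) x) M fun x _ => hM (ψ x) x
  rw [misclassificationMass_eq_card_sub P hP]
  linarith

end Misclassification

lemma Fintype.sum_pi_prod_eq_one {ι β : Type*} [Fintype ι] [DecidableEq ι] [Fintype β]
    (f : ι → β → ℝ) (hf : ∀ i, ∑ b, f i b = 1) :
    ∑ x : ι → β, ∏ i, f i (x i) = 1 := by
  simp [← Fintype.prod_sum, hf]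

namespace HideAndSeek

variable {d : ℕ} {θ : ℝ}

noncomputable def coordPMF (θ : ℝ) (w i : Fin d) (b : Fin 2) : ℝ :=
  if i = w then (if b = 1 then 1 / 2 + θ else 1 / 2 - θ) else 1 / 2

lemma sum_coordPMF (θ : ℝ) (w i : Fin d) : ∑ b, coordPMF θ w i b = 1 := by
  by_cases h : i = w <;> simp [coordPMF, h, Fin.sum_univ_two]
  ring

lemma coordPMF_nonneg (hθ0 : 0 ≤ θ) (hθ : θ ≤ 1 / 2) (w i : Fin d) (b : Fin 2) :
    0 ≤ coordPMF θ w i b := by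
  unfold coordPMF
  split_ifs <;> linarith

lemma coordPMF_le (hθ0 : 0 ≤ θ) (w i : Fin d) (b : Fin 2) :
    coordPMF θ w i b ≤ (if i = w then 1 + 2 * θ else 1) / 2 := by
  unfold coordPMF
  split_ifs <;> linarith

lemma prod_coordPMF_le (hθ0 : 0 ≤ θ) (hθ : θ ≤ 1 / 2) (w : Fin d) (y : Fin d → Fin 2) :
    ∏ i, coordPMF θ w i (y i) ≤ (1 + 2 * θ) / 2 ^ d := by
  calc ∏ i, coordPMF θ w i (y i)
      ≤ ∏ i, (if i = w then 1 + 2 * θ else 1) / 2 :=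
        prod_le_prod (fun i _ => coordPMF_nonneg hθ0 hθ w i _) fun i _ => coordPMF_le hθ0 w i _
    _ = (1 + 2 * θ) / 2 ^ d := by simp [prod_div_distrib]

lemma sum_prod_prod_coordPMF {N : ℕ} (θ : ℝ) (w : Fin d) :
    ∑ x : Fin N → Fin d → Fin 2, ∏ j, ∏ i, coordPMF θ w i (x j i) = 1 :=
  Fintype.sum_pi_prod_eq_one _ fun _ => Fintype.sum_pi_prod_eq_one _ (sum_coordPMF θ w)

lemma prod_prod_coordPMF_le {N : ℕ} (hθ0 : 0 ≤ θ) (hθ : θ ≤ 1 / 2) (w : Fin d)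
    (x : Fin N → Fin d → Fin 2) :
    ∏ j, ∏ i, coordPMF θ w i (x j i) ≤ ((1 + 2 * θ) / 2 ^ d) ^ N := by
  calc ∏ j, ∏ i, coordPMF θ w i (x j i)
      ≤ ∏ _j : Fin N, (1 + 2 * θ) / 2 ^ d :=
        prod_le_prod (fun j _ => prod_nonneg fun i _ => coordPMF_nonneg hθ0 hθ w i (x j i))
          fun j _ => prod_coordPMF_le hθ0 hθ w (x j)
    _ = ((1 + 2 * θ) / 2 ^ d) ^ N := by rw [prod_const, card_univ, Fintype.card_fin]

end HideAndSeek

theorem hide_and_seek_error_ge_general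
    (d N : ℕ) (hd : 1 ≤ d)
    (θ : ℝ) (hθ0 : 0 ≤ θ) (hθ : θ ≤ 1 / 2)
    (ψ : (Fin N → Fin d → Fin 2) → Fin d) :
    1 - (1 + 2 * θ) ^ N / d ≤
      (1 / d : ℝ) * ∑ w : Fin d,
        ∑ x ∈ Finset.univ.filter (fun x : Fin N → Fin d → Fin 2 => ψ x ≠ w),
          ∏ j : Fin N, ∏ i : Fin d,
            (if i = w then (if x j i = 1 then 1 / 2 + θ else 1 / 2 - θ)
             else (1 / 2 : ℝ)) := by
  have hbound := card_sub_card_mul_le_misclassificationMass _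
    (HideAndSeek.sum_prod_prod_coordPMF θ) (HideAndSeek.prod_prod_coordPMF_le hθ0 hθ) ψ
  have hmass : (Fintype.card (Fin N → Fin d → Fin 2) : ℝ) * ((1 + 2 * θ) / 2 ^ d) ^ N
      = (1 + 2 * θ) ^ N := by
    simp only [Fintype.card_fun, Fintype.card_fin]
    push_cast
    rw [← mul_pow, mul_div_cancel₀ _ (by positivity)]
  have hd' : (0 : ℝ) < d := by exact_mod_cast hd
  rw [Fintype.card_fin, hmass] at hbound
  rw [one_div, ← div_eq_inv_mul, le_div_iff₀ hd', sub_mul, div_mul_cancel₀ _ hd'.ne', one_mul]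
  exact hbound

/-- Maximal-leakage lower bound for the "Hide-and-Seek" problem: the probability of error
of any estimator of the biased coordinate is at least `1 − (1+2θ)^N / d`. -/
theorem hide_and_seek_error_ge
    (d N : ℕ) (hd : 1 ≤ d) (hN : 1 ≤ N)
    (θ : ℝ) (hθ0 : 0 ≤ θ) (hθ : θ ≤ 1 / 2)
    (ψ : (Fin N → Fin d → Fin 2) → Fin d) :
    1 - (1 + 2 * θ) ^ N / d ≤
      (1 / d : ℝ) * ∑ w : Fin d,
        ∑ x ∈ Finset.univ.filter (fun x : Fin N → Fin d → Fin 2 => ψ x ≠ w),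
          ∏ j : Fin N, ∏ i : Fin d,
            (if i = w then (if x j i = 1 then 1 / 2 + θ else 1 / 2 - θ)
             else (1 / 2 : ℝ)) :=
  hide_and_seek_error_ge_general d N hd θ hθ0 hθ ψ
end

section
/- The strong data-processing behaviour of the Rényi divergence of order 6 through the binary symmetric channel K = BSC(1/5) started at the uniform distribution violates the Dobrushin total-variation bound: (1/5) · log( 32 · ( (4/5)^6 + (1/5)^6 ) ) > (3/5) · log 2. Equivalently, D_6(δ₀K ‖ μK) > 0.6 · D_6(δ₀ ‖ μ), where μ is uniform on {0,1}, δ₀K = (4/5, 1/5), μK = (1/2, 1/2), D_6(δ₀K ‖ μK) = (1/5)·log(2^5·((4/5)^6 + (1/5)^6)) and D_6(δ₀ ‖ μ) = log 2, while the Dobrushin contraction coefficient of BSC(1/5) equals 1 − 2·(1/5) = 3/5. -/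
/-- The Rényi divergence of order 6 through `BSC(1/5)` started at the uniform distribution
violates the Dobrushin total-variation contraction bound:
`D₆(δ₀K ‖ μK) = (1/5)·log(32·((4/5)⁶ + (1/5)⁶)) > (3/5)·log 2 = (1 − 2·(1/5))·D₆(δ₀ ‖ μ)`. -/
theorem renyi_violates_dobrushin :
    (3 / 5 : ℝ) * Real.log 2 <
      (1 / 5 : ℝ) * Real.log (32 * ((4 / 5 : ℝ) ^ 6 + (1 / 5 : ℝ) ^ 6)) := by
  have h : (32 * ((4 / 5 : ℝ) ^ 6 + (1 / 5 : ℝ) ^ 6)) = 131104 / 15625 := by norm_num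
  rw [h]
  have h8 : (3 : ℝ) * Real.log 2 = Real.log 8 := by
    rw [show (8:ℝ) = 2^3 by norm_num, Real.log_pow]; push_cast; ring
  have hlt : Real.log 8 < Real.log (131104 / 15625) :=
    Real.log_lt_log (by norm_num) (by norm_num)
  nlinarith
end
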